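/- Let n ≥ 2 and d : Fin n → ℕ with d j ≥ 2 for every j; set S = ∑ j, (d j − 1) and D = ∏ j, d j. Let W be the span in EuclideanSpace ℂ ((j : Fin n) → Fin (d j)) of the states {𝔊_n^k : 0 ≤ k ≤ S}. Then the multipartite space decomposes as the orthogonal direct sum of: (i) the span of the two coordinate basis vectors e_{(0,…,0)} and e_{(d_1−1,…,d_n−1)}; (ii) the span of {𝔊_n^k : 1 ≤ k ≤ S−1}, which has finrank S − 1 and all of whose nonzero vectors are GME; and (iii) the orthogonal complement Wᗮ, which has finrank D − S − 1 and contains no nonzero fully product vector (a CES of the maximal possible dimension). -/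

import Mathlib

/-!
The states `𝔊^k` have disjoint supports, so they are pairwise orthogonal, and they are nonzero
for `k ≤ S`; hence they form an orthogonal basis of `W`, and `A`, `B` are spanned by the
complementary families `{𝔊^0, 𝔊^S}` and `{𝔊^k : 0 < k < S}`.

A vector of `B` has coordinates `ψ i = f |i|` depending only on the level `|i| = ∑ j, i j`, with
`f 0 = f S = 0`. A factorisation across `(T, Tᶜ)` makes the Hankel matrix `f (x + y)`,
`x ≤ S_T`, `y ≤ S_{Tᶜ}`, of rank one; its `2 × 2` minors give `f (k+1)² = f k * f (k+2)` for
`k + 2 ≤ S`, and `f` vanishes by induction from `f 0 = 0`.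

A product vector `ψ i = ∏ j, φ j (i j)` has generating polynomial
`∑ i, ψ i X^|i| = ∏ j, ∑ a, φ j a X^a`, whose coefficients are the inner products `⟪𝔊^k, ψ⟫`.
For `ψ ∈ Wᗮ` it vanishes, so some factor vanishes, and then so does `ψ`.
-/

/-- The unnormalized multipartite state `𝔊_n^k`, the uniform superposition of all
basis vectors `|i₁⋯iₙ⟩` with `i₁ + ⋯ + iₙ = k`. -/
noncomputable def gFrak (n : ℕ) (d : Fin n → ℕ) (k : ℕ) :
    EuclideanSpace ℂ ((j : Fin n) → Fin (d j)) :=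
  WithLp.toLp 2 (fun i => if (∑ j, ((i j : ℕ))) = k then 1 else 0)

/-- A vector of the multipartite space is *fully product* if it is a simple tensor. -/
def FullyProduct {n : ℕ} {d : Fin n → ℕ}
    (ψ : EuclideanSpace ℂ ((j : Fin n) → Fin (d j))) : Prop :=
  ∃ φ : (j : Fin n) → Fin (d j) → ℂ, ∀ i, ψ i = ∏ j, φ j (i j)

/-- `ψ` is biseparable across the bipartition `(T, Tᶜ)` of the `n` parties. -/
def Biseparable {n : ℕ} {d : Fin n → ℕ} (T : Set (Fin n))
    (ψ : EuclideanSpace ℂ ((j : Fin n) → Fin (d j))) : Prop :=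
  ∃ (φ : ((j : T) → Fin (d j.val)) → ℂ) (χ : ((j : ↥Tᶜ) → Fin (d j.val)) → ℂ),
    ∀ i, ψ i = φ (fun j => i j.val) * χ (fun j => i j.val)

/-- A nonzero vector is genuinely multipartite entangled if it is not biseparable
across any nontrivial bipartition. -/
def GME {n : ℕ} {d : Fin n → ℕ}
    (ψ : EuclideanSpace ℂ ((j : Fin n) → Fin (d j))) : Prop :=
  ψ ≠ 0 ∧ ∀ T : Set (Fin n), T ≠ ∅ → T ≠ Set.univ → ¬ Biseparable T ψ

open Finset
open scoped InnerProductSpace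

theorem eq_zero_of_mul_self_eq_mul_adjacent {R : Type*} [MulZeroClass R] [NoZeroDivisors R]
    {f : ℕ → R} {N : ℕ} (h0 : f 0 = 0) (hN : f N = 0)
    (h : ∀ k, k + 2 ≤ N → f (k + 1) * f (k + 1) = f (k + 2) * f k) :
    ∀ k ≤ N, f k = 0
  | 0, _ => h0
  | k + 1, hk => by
    obtain rfl | hlt := eq_or_lt_of_le hk
    · exact hN
    · rw [← mul_self_eq_zero, h k hlt,
        eq_zero_of_mul_self_eq_mul_adjacent h0 hN h k (by omega), mul_zero]

theorem eq_zero_of_hankel_rank_one {R : Type*} [MulZeroClass R] [NoZeroDivisors R]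
    {f : ℕ → R} {S₁ S₂ : ℕ} (h₁ : 1 ≤ S₁) (h₂ : 1 ≤ S₂) (h0 : f 0 = 0) (hN : f (S₁ + S₂) = 0)
    (H : ∀ x x' y y', x ≤ S₁ → x' ≤ S₁ → y ≤ S₂ → y' ≤ S₂ →
      f (x + y) * f (x' + y') = f (x + y') * f (x' + y)) :
    ∀ k ≤ S₁ + S₂, f k = 0 := by
  refine eq_zero_of_mul_self_eq_mul_adjacent h0 hN fun k hk => ?_
  -- the minor with rows `x, x - 1` and columns `y, y + 1`, where `x + y = k + 1`, `1 ≤ x`, `y < S₂`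
  set x := min (k + 1) S₁
  convert H x (x - 1) (k + 1 - x) (k + 2 - x) (by omega) (by omega) (by omega) (by omega)
    using 2 <;> congr 1 <;> omega

theorem exists_sum_val_eq {ι : Type*} [DecidableEq ι] {d : ι → ℕ} (hd : ∀ j, 0 < d j)
    (s : Finset ι) {k : ℕ} (hk : k ≤ ∑ j ∈ s, (d j - 1)) :
    ∃ i : (j : ι) → Fin (d j), ∑ j ∈ s, (i j : ℕ) = k := by
  induction s using Finset.induction generalizing k with
  | empty => exact ⟨fun j => ⟨0, hd j⟩, by simp_all⟩
  | @insert a s ha ih =>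
    rw [sum_insert ha] at hk
    obtain ⟨i, hi⟩ := ih (k := k - min k (d a - 1)) (by omega)
    refine ⟨Function.update i a ⟨min k (d a - 1), by have := hd a; omega⟩, ?_⟩
    rw [sum_insert ha, Function.update_self, sum_congr rfl fun j hj =>
      congrArg _ (Function.update_of_ne (ne_of_mem_of_not_mem hj ha) _ _), hi]
    simp only
    omega

theorem sum_val_le_sum_pred {ι : Type*} {d : ι → ℕ} (s : Finset ι) (i : (j : ι) → Fin (d j)) :
    ∑ j ∈ s, (i j : ℕ) ≤ ∑ j ∈ s, (d j - 1) :=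
  sum_le_sum fun j _ => Nat.le_sub_one_of_lt (i j).isLt

theorem sum_val_eq_zero_iff {ι : Type*} [Fintype ι] {d : ι → ℕ} (hd : ∀ j, 0 < d j)
    (i : (j : ι) → Fin (d j)) : ∑ j, (i j : ℕ) = 0 ↔ i = fun j => ⟨0, hd j⟩ := by
  simp [sum_eq_zero_iff, funext_iff, Fin.ext_iff]

theorem sum_val_eq_sum_pred_iff {ι : Type*} [Fintype ι] {d : ι → ℕ} (hd : ∀ j, 0 < d j)
    (i : (j : ι) → Fin (d j)) :
    ∑ j, (i j : ℕ) = ∑ j, (d j - 1) ↔ i = fun j => ⟨d j - 1, Nat.sub_lt (hd j) one_pos⟩ := by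
  rw [sum_eq_sum_iff_of_le fun j _ => Nat.le_sub_one_of_lt (i j).isLt]
  simp [funext_iff, Fin.ext_iff]

theorem sum_piecewise_val {ι : Type*} [Fintype ι] [DecidableEq ι] {d : ι → ℕ} (s : Finset ι)
    (u w : (j : ι) → Fin (d j)) :
    ∑ j, (s.piecewise u w j : ℕ) = ∑ j ∈ s, (u j : ℕ) + ∑ j ∈ sᶜ, (w j : ℕ) := by
  rw [← sum_add_sum_compl s]
  congr 1 <;> refine sum_congr rfl fun j hj => ?_
  · rw [s.piecewise_eq_of_mem _ _ hj]
  · rw [s.piecewise_eq_of_notMem _ _ (mem_compl.mp hj)]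

section Multipartite

variable {n : ℕ} {d : Fin n → ℕ}

theorem Biseparable.piecewise_mul_piecewise {s : Finset (Fin n)}
    {ψ : EuclideanSpace ℂ ((j : Fin n) → Fin (d j))} (h : Biseparable (s : Set (Fin n)) ψ)
    (u u' w w' : (j : Fin n) → Fin (d j)) :
    ψ (s.piecewise u w) * ψ (s.piecewise u' w') = ψ (s.piecewise u w') * ψ (s.piecewise u' w) := by
  obtain ⟨φ, χ, h⟩ := h
  have hφ : ∀ u w : (j : Fin n) → Fin (d j),
      (fun j : (s : Set (Fin n)) => s.piecewise u w j) = fun j : (s : Set (Fin n)) => u j :=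
    fun u w => funext fun j => s.piecewise_eq_of_mem u w j.2
  have hχ : ∀ u w : (j : Fin n) → Fin (d j),
      (fun j : ↥(s : Set (Fin n))ᶜ => s.piecewise u w j) = fun j : ↥(s : Set (Fin n))ᶜ => w j :=
    fun u w => funext fun j => s.piecewise_eq_of_notMem u w j.2
  simp only [h, hφ, hχ]
  ring

theorem gme_of_apply_eq_comp_sum (hd : ∀ j, 2 ≤ d j) {f : ℕ → ℂ} (hf0 : f 0 = 0)
    (hfS : f (∑ j, (d j - 1)) = 0) {ψ : EuclideanSpace ℂ ((j : Fin n) → Fin (d j))}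
    (hψ : ∀ i, ψ i = f (∑ j, (i j : ℕ))) (hne : ψ ≠ 0) : GME ψ := by
  classical
  have hd₀ : ∀ j, 0 < d j := fun j => by have := hd j; omega
  refine ⟨hne, fun T hT hTu hsep => hne ?_⟩
  lift T to Finset (Fin n) using T.toFinite
  have one_le {s : Finset (Fin n)} (hs : s.Nonempty) : 1 ≤ ∑ j ∈ s, (d j - 1) := by
    obtain ⟨j, hj⟩ := hs
    exact le_trans (by have := hd j; omega) (single_le_sum (fun _ _ => Nat.zero_le _) hj)
  have hT₁ : T.Nonempty := nonempty_iff_ne_empty.mpr (by simpa using hT)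
  have hT₂ : Tᶜ.Nonempty := nonempty_iff_ne_empty.mpr (by simpa using hTu)
  have hsplit := sum_add_sum_compl T fun j => d j - 1
  have hvanish : ∀ k ≤ ∑ j, (d j - 1), f k = 0 := by
    rw [← hsplit] at hfS ⊢
    refine eq_zero_of_hankel_rank_one (one_le hT₁) (one_le hT₂) hf0 hfS
      fun x x' y y' hx hx' hy hy' => ?_
    obtain ⟨u, rfl⟩ := exists_sum_val_eq hd₀ T hx
    obtain ⟨u', rfl⟩ := exists_sum_val_eq hd₀ T hx'
    obtain ⟨w, rfl⟩ := exists_sum_val_eq hd₀ Tᶜ hy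
    obtain ⟨w', rfl⟩ := exists_sum_val_eq hd₀ Tᶜ hy'
    simpa only [hψ, sum_piecewise_val] using hsep.piecewise_mul_piecewise u u' w w'
  ext i
  rw [hψ, hvanish _ (sum_val_le_sum_pred _ i)]
  rfl

theorem inner_gFrak_left (k : ℕ) (ψ : EuclideanSpace ℂ ((j : Fin n) → Fin (d j))) :
    ⟪gFrak n d k, ψ⟫_ℂ = ∑ i, if ∑ j, (i j : ℕ) = k then ψ i else 0 := by
  simp [PiLp.inner_apply, gFrak, apply_ite]

theorem inner_gFrak_gFrak {k k' : ℕ} (h : k ≠ k') : ⟪gFrak n d k, gFrak n d k'⟫_ℂ = 0 := by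
  rw [inner_gFrak_left]
  refine sum_eq_zero fun i _ => ?_
  simp only [gFrak]
  split_ifs <;> first | rfl | omega

theorem gFrak_ne_zero (hd : ∀ j, 0 < d j) {k : ℕ} (hk : k ≤ ∑ j, (d j - 1)) : gFrak n d k ≠ 0 := by
  obtain ⟨i, hi⟩ := exists_sum_val_eq hd univ hk
  intro h
  simpa [gFrak, hi] using congrArg (· i) h

theorem single_eq_gFrak {k : ℕ} (p : (j : Fin n) → Fin (d j))
    (hp : ∀ i, ∑ j, (i j : ℕ) = k ↔ i = p) : EuclideanSpace.single p (1 : ℂ) = gFrak n d k := by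
  ext i
  simp [gFrak, hp]

def gFrakSpan (n : ℕ) (d : Fin n → ℕ) (s : Finset ℕ) :
    Submodule ℂ (EuclideanSpace ℂ ((j : Fin n) → Fin (d j))) :=
  Submodule.span ℂ (gFrak n d '' s)

theorem gFrakSpan_union (s t : Finset ℕ) :
    gFrakSpan n d (s ∪ t) = gFrakSpan n d s ⊔ gFrakSpan n d t := by
  simp only [gFrakSpan, coe_union, Set.image_union, Submodule.span_union]

theorem gFrakSpan_isOrtho {s t : Finset ℕ} (h : Disjoint s t) :
    (gFrakSpan n d s).IsOrtho (gFrakSpan n d t) := by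
  simp only [gFrakSpan, Submodule.isOrtho_span, Set.forall_mem_image]
  exact fun k hk k' hk' => inner_gFrak_gFrak (disjoint_left.mp h hk <| · ▸ hk')

theorem finrank_gFrakSpan (hd : ∀ j, 0 < d j) {s : Finset ℕ}
    (hs : ∀ k ∈ s, k ≤ ∑ j, (d j - 1)) : Module.finrank ℂ (gFrakSpan n d s) = s.card := by
  have hli : LinearIndependent ℂ fun k : (s : Set ℕ) => gFrak n d k :=
    linearIndependent_of_ne_zero_of_inner_eq_zero (fun k => gFrak_ne_zero hd (hs k k.2))
      fun k k' hkk' => inner_gFrak_gFrak (Subtype.coe_injective.ne hkk')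
  rw [gFrakSpan, Set.image_eq_range, finrank_span_eq_card hli]
  simp

theorem exists_apply_eq_comp_sum_of_mem_gFrakSpan {s : Finset ℕ}
    {ψ : EuclideanSpace ℂ ((j : Fin n) → Fin (d j))} (hψ : ψ ∈ gFrakSpan n d s) :
    ∃ f : ℕ → ℂ, (∀ k ∉ s, f k = 0) ∧ ∀ i, ψ i = f (∑ j, (i j : ℕ)) := by
  induction hψ using Submodule.span_induction with
  | mem _ hx =>
    obtain ⟨k, hk, rfl⟩ := hx
    exact ⟨fun t => if t = k then 1 else 0, fun t ht => if_neg (by rintro rfl; exact ht hk),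
      fun i => rfl⟩
  | zero => exact ⟨0, fun _ _ => rfl, fun _ => rfl⟩
  | add _ _ _ _ hx hy =>
    obtain ⟨f, hf, hfx⟩ := hx
    obtain ⟨g, hg, hgy⟩ := hy
    exact ⟨f + g, fun k hk => by simp [hf k hk, hg k hk], fun i => by simp [hfx, hgy]⟩
  | smul c _ _ hx =>
    obtain ⟨f, hf, hfx⟩ := hx
    exact ⟨c • f, fun k hk => by simp [hf k hk], fun i => by simp [hfx]⟩

open Polynomial in
theorem FullyProduct.eq_zero_of_inner_gFrak_eq_zero
    {ψ : EuclideanSpace ℂ ((j : Fin n) → Fin (d j))} (hψ : FullyProduct ψ)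
    (horth : ∀ k ≤ ∑ j, (d j - 1), ⟪gFrak n d k, ψ⟫_ℂ = 0) : ψ = 0 := by
  classical
  obtain ⟨φ, hφ⟩ := hψ
  have hprod : ∏ j, ofFn (d j) (φ j) = ∑ i, C (ψ i) * X ^ (∑ j, (i j : ℕ)) := by
    simp only [ofFn_eq_sum_monomial, ← C_mul_X_pow_eq_monomial, Fintype.prod_sum, hφ,
      prod_mul_distrib, map_prod, prod_pow_eq_pow_sum]
  have hzero : ∏ j, ofFn (d j) (φ j) = 0 := by
    ext k
    rw [hprod, finsetSum_coeff, coeff_zero]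
    by_cases hk : k ≤ ∑ j, (d j - 1)
    · simpa [coeff_C_mul_X_pow, eq_comm, inner_gFrak_left] using horth k hk
    · exact sum_eq_zero fun i _ => by
        rw [coeff_C_mul_X_pow, if_neg (by have := sum_val_le_sum_pred univ i; omega)]
  obtain ⟨j, -, hj⟩ := prod_eq_zero_iff.mp hzero
  rw [← (ofFn (d j)).map_zero, (injective_ofFn (d j)).eq_iff] at hj
  ext i
  simpa [hφ] using prod_eq_zero (f := fun j => φ j (i j)) (mem_univ j) (by simp [hj])

end Multipartite

/-- Theorem 7: the multipartite Hilbert space `⊗_j ℂ^{d_j}` decomposes as the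
orthogonal direct sum
`span{|0…0⟩, |d₁−1 … dₙ−1⟩} ⊕ GES_{S−1} ⊕ CES_{D−S−1}`, where `S = ∑ (d j − 1)`
and `D = ∏ d j`, the last summand being a CES of the maximal possible dimension. -/
theorem multipartite_decomposition (n : ℕ) (d : Fin n → ℕ)
    (hd : ∀ j, 2 ≤ d j) (S D : ℕ) (hS : S = ∑ j, (d j - 1)) (hD : D = ∏ j, d j)
    (W : Submodule ℂ (EuclideanSpace ℂ ((j : Fin n) → Fin (d j))))
    (hW : W = Submodule.span ℂ {v | ∃ k ≤ S, v = gFrak n d k})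
    (A : Submodule ℂ (EuclideanSpace ℂ ((j : Fin n) → Fin (d j))))
    (hA : A = Submodule.span ℂ
        {EuclideanSpace.single (fun j => (⟨0, by have := hd j; omega⟩ : Fin (d j))) (1 : ℂ),
         EuclideanSpace.single (fun j => (⟨d j - 1, by have := hd j; omega⟩ : Fin (d j))) (1 : ℂ)})
    (B : Submodule ℂ (EuclideanSpace ℂ ((j : Fin n) → Fin (d j))))
    (hB : B = Submodule.span ℂ {v | ∃ k, 1 ≤ k ∧ k ≤ S - 1 ∧ v = gFrak n d k}) :
    Submodule.IsOrtho A B ∧ Submodule.IsOrtho A Wᗮ ∧ Submodule.IsOrtho B Wᗮ ∧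
    A ⊔ B ⊔ Wᗮ = ⊤ ∧
    Module.finrank ℂ ↥B = S - 1 ∧
    (∀ ψ ∈ B, ψ ≠ 0 → GME ψ) ∧
    Module.finrank ℂ ↥(Wᗮ) = D - S - 1 ∧
    (∀ ψ ∈ Wᗮ, FullyProduct ψ → ψ = 0) := by
  have hd₀ : ∀ j, 0 < d j := fun j => by have := hd j; omega
  have hA' : A = gFrakSpan n d {0, S} := by
    rw [hA, single_eq_gFrak _ (sum_val_eq_zero_iff hd₀),
      single_eq_gFrak _ (sum_val_eq_sum_pred_iff hd₀), ← hS]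
    simp [gFrakSpan, Set.image_insert_eq]
  have hB' : B = gFrakSpan n d (Icc 1 (S - 1)) := by
    rw [hB, gFrakSpan]; congr; ext; simp [eq_comm, and_assoc]
  have hW' : W = gFrakSpan n d (Iic S) := by
    rw [hW, gFrakSpan]; congr; ext; simp [eq_comm]
  have hAB : A ⊔ B = W := by
    rw [hA', hB', hW', ← gFrakSpan_union]; congr 1; ext
    simp only [insert_union, singleton_union, mem_insert, mem_Icc, mem_Iic]; omega
  have hfinW : Module.finrank ℂ W = S + 1 := by
    rw [hW', finrank_gFrakSpan hd₀ fun k hk => hS ▸ mem_Iic.mp hk]; simp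
  refine ⟨?_, (W.isOrtho_orthogonal_right).mono_left (hAB ▸ le_sup_left),
    (W.isOrtho_orthogonal_right).mono_left (hAB ▸ le_sup_right),
    hAB ▸ W.sup_orthogonal_of_hasOrthogonalProjection, ?_, ?_, ?_, ?_⟩
  · rw [hA', hB']
    exact gFrakSpan_isOrtho (disjoint_left.mpr fun k hk hk' => by
      simp only [mem_insert, mem_singleton, mem_Icc] at hk hk'; omega)
  · rw [hB', finrank_gFrakSpan hd₀ fun k hk => by simp only [mem_Icc] at hk; omega]; simp
  · intro ψ hψ hne
    obtain ⟨f, hf, hψf⟩ := exists_apply_eq_comp_sum_of_mem_gFrakSpan (hB' ▸ hψ)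
    exact gme_of_apply_eq_comp_sum hd (hf 0 (by simp)) (hf _ (by simp only [mem_Icc]; omega)) hψf hne
  · have := W.finrank_add_finrank_orthogonal
    rw [hfinW, finrank_euclideanSpace, Fintype.card_pi] at this
    simp only [Fintype.card_fin] at this; omega
  · intro ψ hψ hprod
    exact hprod.eq_zero_of_inner_gFrak_eq_zero fun k hk =>
      (W.mem_orthogonal ψ).mp hψ _ (hW ▸ Submodule.subset_span ⟨k, hS ▸ hk, rfl⟩)
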